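/- Let A be an integral domain and R = A[x]. Suppose I = (f, g) is an ideal of R generated by two elements f ∈ A and g = c·x^β with c ∈ A, β ≥ 1, such that the vanishing locus of I is contained in the locus x = 0, i.e., x lies in the radical of I. Then the image of c in A/(f) is a unit, and hence I = (f, x^β). -/

import Mathlib

/-!
Reducing modulo `f` turns `x ∈ √(f, c·x^β)` into `x ∈ √(c̄·x^β)` over `(A/(f))[x]`, so the
constant `c̄` divides a power of `x`, hence divides its leading coefficient `1`. Once `c` is
invertible modulo `f`, the generator `c·x^β` may be replaced by `x^β`.
-/

open Polynomial

namespace Polynomial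

theorem isUnit_of_X_mem_radical_span_C_mul_X_pow {B : Type*} [CommRing B] {c : B} {β : ℕ}
    (hX : (X : B[X]) ∈ (Ideal.span {C c * X ^ β}).radical) : IsUnit c := by
  obtain ⟨n, hn⟩ := hX
  have hdvd : C c ∣ (X ^ n : B[X]) :=
    (dvd_mul_right _ _).trans (Ideal.mem_span_singleton.mp hn)
  exact isUnit_of_dvd_one (by simpa using (C_dvd_iff_dvd_coeff c _).mp hdvd n)

theorem isUnit_mk_of_X_mem_radical_span_pair {A : Type*} [CommRing A] {f c : A} {β : ℕ}
    (hX : (X : A[X]) ∈ (Ideal.span {C f, C c * X ^ β}).radical) :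
    IsUnit (Ideal.Quotient.mk (Ideal.span {f}) c) := by
  set π := Ideal.Quotient.mk (Ideal.span {f})
  have hπf : π f = 0 := Ideal.Quotient.eq_zero_iff_mem.mpr (Ideal.mem_span_singleton_self f)
  apply isUnit_of_X_mem_radical_span_C_mul_X_pow (β := β)
  have := Ideal.map_radical_le (mapRingHom π) (Ideal.mem_map_of_mem (mapRingHom π) hX)
  simpa [Ideal.map_span, Set.image_pair, hπf] using this

end Polynomial

theorem Ideal.span_pair_mul_eq_of_isUnit_mk {R : Type*} [CommRing R] {a u : R} (b : R)
    (hu : IsUnit (Ideal.Quotient.mk (Ideal.span {a}) u)) :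
    Ideal.span {a, u * b} = Ideal.span {a, b} := by
  obtain ⟨v', hv'⟩ := hu.exists_right_inv
  obtain ⟨v, rfl⟩ := Ideal.Quotient.mk_surjective v'
  obtain ⟨t, ht⟩ : a ∣ u * v - 1 := by
    rw [← Ideal.mem_span_singleton, ← Ideal.Quotient.eq_zero_iff_mem, map_sub, map_mul, hv',
      map_one, sub_self]
  apply le_antisymm <;> rw [Ideal.span_le, Set.insert_subset_iff, Set.singleton_subset_iff]
  · exact ⟨Ideal.subset_span (by simp), Ideal.mul_mem_left _ _ (Ideal.subset_span (by simp))⟩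
  · refine ⟨Ideal.subset_span (by simp), Ideal.mem_span_pair.mpr ⟨-(t * b), v, ?_⟩⟩
    linear_combination b * ht

theorem unit_coefficient_of_x_in_radical_general
    (A : Type*) [CommRing A] (f c : A) (β : ℕ)
    (hx : (X : A[X]) ∈ (Ideal.span ({C f, C c * X ^ β} : Set A[X])).radical) :
    IsUnit (Ideal.Quotient.mk (Ideal.span {f}) c) ∧
      Ideal.span ({C f, C c * X ^ β} : Set A[X]) =
        Ideal.span ({C f, X ^ β} : Set A[X]) := by
  have hc := isUnit_mk_of_X_mem_radical_span_pair hx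
  refine ⟨hc, Ideal.span_pair_mul_eq_of_isUnit_mk _ ?_⟩
  have hle : Ideal.span {f} ≤ (Ideal.span {C f}).comap (C : A →+* A[X]) := by
    rw [Ideal.span_le, Set.singleton_subset_iff]
    exact Ideal.mem_span_singleton_self (C f)
  simpa using hc.map (Ideal.quotientMap _ C hle)

/-- Let `A` be an integral domain, `R = A[x]`, `f ∈ A`, `g = c·x^β` with
`c ∈ A` and `β ≥ 1`, and `I = (f, g)`.  If the vanishing locus of `I` is contained in
the locus `x = 0`, i.e. `x ∈ √I`, then the image of `c` in `A/(f)` is a unit, and hence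
`I = (f, x^β)`. -/
theorem unit_coefficient_of_x_in_radical
    (A : Type*) [CommRing A] [IsDomain A] (f c : A) (β : ℕ) (hβ : 1 ≤ β)
    (hx : (X : A[X]) ∈ (Ideal.span ({C f, C c * X ^ β} : Set A[X])).radical) :
    IsUnit (Ideal.Quotient.mk (Ideal.span {f}) c) ∧
      Ideal.span ({C f, C c * X ^ β} : Set A[X]) =
        Ideal.span ({C f, X ^ β} : Set A[X]) :=
  unit_coefficient_of_x_in_radical_general A f c β hx
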